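/- Let G be a simple connected graph with m edges and S_q(G) its q-subdivision graph. If i is a new node of S_q(G) with neighbors s, t (old nodes) and j is any old node, then the hitting times on S_q(G) satisfy T̂_{ij} = 1 + 2(T_{sj} + T_{tj}) and T̂_{ji} = 2mq - 1 + 2(T_{js} + T_{jt}) - (T_{ts} + T_{st}), where T denotes hitting times on G. -/

import Mathlib

open Finset

variable {V : Type*}

/-- Normalized adjacency matrix `P = D^{-1/2} A D^{-1/2}`. -/
noncomputable def normAdj [Fintype V] (G : SimpleGraph V) [DecidableRel G.Adj] :
    Matrix V V ℝ :=
  Matrix.of fun i j =>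
    if G.Adj i j then 1 / Real.sqrt ((G.degree i : ℝ) * (G.degree j : ℝ)) else 0

lemma normAdj_isHermitian [Fintype V] (G : SimpleGraph V) [DecidableRel G.Adj] :
    (normAdj G).IsHermitian := by
  ext i j
  simp only [Matrix.conjTranspose_apply, normAdj, Matrix.of_apply, star_trivial]
  by_cases h : G.Adj i j
  · rw [if_pos h, if_pos ((G.adj_comm i j).mp h), mul_comm]
  · rw [if_neg h, if_neg (fun h' => h ((G.adj_comm j i).mp h'))]

/-- `μ` is an eigenvalue of `M`. -/
def IsEigenvalue {W : Type*} [Fintype W] (M : Matrix W W ℝ) (μ : ℝ) : Prop :=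
  ∃ v : W → ℝ, v ≠ 0 ∧ M.mulVec v = μ • v

/-- Multiplicity of `μ` as an eigenvalue of `M` (dimension of the eigenspace). -/
noncomputable def eigMult {W : Type*} [Fintype W] [DecidableEq W]
    (M : Matrix W W ℝ) (μ : ℝ) : ℕ :=
  Module.finrank ℝ (LinearMap.ker (Matrix.toLin' (M - μ • (1 : Matrix W W ℝ))))

/-- `r` is the effective-resistance function of `G`: `r i j = φ i - φ j` where
`L φ = e_i - e_j`. -/
def IsEffRes [Fintype V] [DecidableEq V] (G : SimpleGraph V) [DecidableRel G.Adj]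
    (r : V → V → ℝ) : Prop :=
  ∀ i j : V, ∃ φ : V → ℝ,
    (G.lapMatrix ℝ).mulVec φ =
      (fun k => (if k = i then (1 : ℝ) else 0) - (if k = j then (1 : ℝ) else 0)) ∧
    r i j = φ i - φ j

/-- `T` is the expected-hitting-time function of the simple random walk on `G`. -/
def IsHitting [Fintype V] (G : SimpleGraph V) [DecidableRel G.Adj] (T : V → V → ℝ) : Prop :=
  (∀ j, T j j = 0) ∧
  ∀ i j : V, i ≠ j → T i j = 1 + (∑ k ∈ G.neighborFinset i, T k j) / (G.degree i : ℝ)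

/-- Kemeny constant `∑_{λ eigenvalue ≠ 1} 1/(1-λ)` of the random walk on `G`. -/
noncomputable def kemeny [Fintype V] [DecidableEq V] (G : SimpleGraph V) [DecidableRel G.Adj]
    (hP : (normAdj G).IsHermitian) : ℝ :=
  ∑ i, if hP.eigenvalues i = 1 then 0 else 1 / (1 - hP.eigenvalues i)

/-- Kirchhoff index. -/
noncomputable def kirchhoff [Fintype V] (r : V → V → ℝ) : ℝ :=
  (∑ i, ∑ j, r i j) / 2

/-- Additive degree-Kirchhoff index. -/
noncomputable def addKirchhoff [Fintype V] (G : SimpleGraph V) [DecidableRel G.Adj]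
    (r : V → V → ℝ) : ℝ :=
  (∑ i, ∑ j, ((G.degree i : ℝ) + (G.degree j : ℝ)) * r i j) / 2

/-- Multiplicative degree-Kirchhoff index. -/
noncomputable def mulKirchhoff [Fintype V] (G : SimpleGraph V) [DecidableRel G.Adj]
    (r : V → V → ℝ) : ℝ :=
  (∑ i, ∑ j, (G.degree i : ℝ) * (G.degree j : ℝ) * r i j) / 2

/-- The adjacency relation of the q-subdivision graph. -/
def qSubAdj (G : SimpleGraph V) (q : ℕ) :
    (V ⊕ (G.edgeSet × Fin q)) → (V ⊕ (G.edgeSet × Fin q)) → Prop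
  | Sum.inl u, Sum.inr p => u ∈ (p.1 : Sym2 V)
  | Sum.inr p, Sum.inl u => u ∈ (p.1 : Sym2 V)
  | _, _ => False

/-- The q-subdivision graph `S_q(G)`: every edge `uv` of `G` is replaced by `q`
disjoint paths of length 2. -/
def qSubdivision (G : SimpleGraph V) (q : ℕ) :
    SimpleGraph (V ⊕ (G.edgeSet × Fin q)) where
  Adj := qSubAdj G q
  symm := by
    constructor
    intro a b h
    cases a <;> cases b <;> simp_all [qSubAdj]
  loopless := by
    constructor
    intro a h
    cases a <;> simp_all [qSubAdj]

noncomputable instance (G : SimpleGraph V) (q : ℕ) :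
    DecidableRel (qSubdivision G q).Adj := Classical.decRel _

noncomputable instance [Fintype V] (G : SimpleGraph V) : Fintype G.edgeSet :=
  Fintype.ofFinite _

/-!
Hitting times to a fixed target are the unique solution of the first-step equations on a
connected graph (maximum principle), so it suffices to exhibit solutions on `S_q(G)`.
A new node has exactly its two endpoints as neighbours, so its value is forced to be
`1 + (average of the endpoint values)`, and only the equations at old nodes need checking.
For an old target `j`, a walk in `S_q(G)` needs on average 4 steps per step of `G` (from a new
node it returns with probability `1/2`), and `4 T(·, j)` solves them. For a new target
`i` the values claimed at old nodes are checked the same way, using that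
`∑_{v ∼ u} T_vs = deg u (T_us - 1)` except at `u = s`, where the sum is `2m - deg s` (the return
time to `s` in `G` is `2m / deg s`); at `i` the new-node formula gives the return time `2mq`.
-/

open SimpleGraph

section HittingTime

variable [Fintype V] (H : SimpleGraph V) [DecidableRel H.Adj]

def IsHittingTimeTo (z : V) (f : V → ℝ) : Prop :=
  f z = 0 ∧ ∀ i, i ≠ z → f i = 1 + (∑ k ∈ H.neighborFinset i, f k) / H.degree i

variable {H}

lemma IsHitting.isHittingTimeTo {T : V → V → ℝ} (hT : IsHitting H T) (z : V) :
    IsHittingTimeTo H z (T · z) :=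
  ⟨hT.1 z, fun i hi => hT.2 i z hi⟩

lemma SimpleGraph.Connected.le_of_forall_ne_eq_average (hH : H.Connected) {f : V → ℝ} {z : V}
    (hf : ∀ i, i ≠ z → f i = (∑ k ∈ H.neighborFinset i, f k) / H.degree i) (i : V) :
    f i ≤ f z := by
  obtain ⟨m, -, hm⟩ := exists_max_image univ f ⟨z, mem_univ z⟩
  have hspread : ∀ a b, H.Adj a b → a ≠ z → f a = f m → f b = f m := by
    intro a b hab haz ha
    have hdeg : (H.degree a : ℝ) ≠ 0 := by
      exact_mod_cast (H.degree_pos_iff_exists_adj a).2 ⟨b, hab⟩ |>.ne'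
    have hsum : ∑ k ∈ H.neighborFinset a, f k = ∑ _k ∈ H.neighborFinset a, f m := by
      rw [sum_const, card_neighborFinset_eq_degree, nsmul_eq_mul, ← ha, hf a haz]
      field_simp
    exact (sum_eq_sum_iff_of_le fun k _ => hm k (mem_univ k)).1 hsum b
      ((H.mem_neighborFinset a b).2 hab)
  have hreach : ∀ a b, H.Walk a b → f a = f m → f b = f m ∨ f z = f m := by
    intro a b w
    induction w with
    | nil => exact Or.inl
    | @cons a c _ hac _ ih =>
      intro ha
      by_cases haz : a = z
      · exact Or.inr (haz ▸ ha)
      · exact ih (hspread a c hac haz ha)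
  have hz : f z = f m := (hreach m z (hH.preconnected m z).some rfl).elim id id
  exact hz ▸ hm i (mem_univ i)

lemma IsHittingTimeTo.unique (hH : H.Connected) {z : V} {f g : V → ℝ}
    (hf : IsHittingTimeTo H z f) (hg : IsHittingTimeTo H z g) : f = g := by
  have hmax : ∀ {f g : V → ℝ}, IsHittingTimeTo H z f → IsHittingTimeTo H z g →
      ∀ i, f i - g i ≤ 0 := by
    intro f g hf hg i
    have := hH.le_of_forall_ne_eq_average (f := fun i => f i - g i) (z := z)
      (fun i hi => by rw [hf.2 i hi, hg.2 i hi, sum_sub_distrib, sub_div]; ring) i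
    rwa [hf.1, hg.1, sub_zero] at this
  funext i
  linarith [hmax hf hg i, hmax hg hf i]

lemma IsHittingTimeTo.sum_neighborFinset_of_ne {z : V} {f : V → ℝ}
    (hf : IsHittingTimeTo H z f) {i : V} (hi : i ≠ z) :
    ∑ k ∈ H.neighborFinset i, f k = H.degree i * (f i - 1) := by
  rcases eq_or_ne (H.degree i : ℝ) 0 with hdeg | hdeg
  · have hempty : H.neighborFinset i = ∅ := by
      rw [← card_eq_zero, card_neighborFinset_eq_degree]
      exact_mod_cast hdeg
    rw [hempty, hdeg, sum_empty, zero_mul]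
  · rw [hf.2 i hi]
    field_simp
    ring

lemma SimpleGraph.sum_sum_neighborFinset (g : V → ℝ) :
    ∑ i, ∑ k ∈ H.neighborFinset i, g k = ∑ k, H.degree k * g k := by
  simp only [neighborFinset_eq_filter, sum_filter]
  rw [sum_comm]
  refine sum_congr rfl fun k _ => ?_
  simp_rw [H.adj_comm _ k]
  rw [← sum_filter, ← neighborFinset_eq_filter, sum_const, card_neighborFinset_eq_degree,
    nsmul_eq_mul]

lemma IsHittingTimeTo.sum_neighborFinset_self [DecidableEq V] {z : V} {f : V → ℝ}
    (hf : IsHittingTimeTo H z f) :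
    ∑ k ∈ H.neighborFinset z, f k = 2 * #H.edgeFinset - H.degree z := by
  have hrow : ∀ i, ∑ k ∈ H.neighborFinset i, f k = H.degree i * (f i - 1) +
      if i = z then ∑ k ∈ H.neighborFinset z, f k + H.degree z else 0 := by
    intro i
    rcases eq_or_ne i z with rfl | hi
    · simp [hf.1]
    · rw [hf.sum_neighborFinset_of_ne hi, if_neg hi, add_zero]
  have hdeg : ∑ i, (H.degree i : ℝ) = 2 * #H.edgeFinset := by
    have hnat : ∑ i, H.degree i = 2 * #H.edgeFinset := by
      convert H.sum_degrees_eq_twice_card_edges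
    exact_mod_cast hnat
  have hcount := H.sum_sum_neighborFinset f
  rw [sum_congr rfl fun i _ => hrow i, sum_add_distrib, sum_ite_eq' univ z, if_pos (mem_univ z)]
    at hcount
  simp only [mul_sub, mul_one, sum_sub_distrib, hdeg] at hcount
  linarith

lemma IsHittingTimeTo.sum_neighborFinset [DecidableEq V] {z : V} {f : V → ℝ}
    (hf : IsHittingTimeTo H z f) (i : V) :
    ∑ k ∈ H.neighborFinset i, f k =
      H.degree i * (f i - 1) + if i = z then (2 * #H.edgeFinset : ℝ) else 0 := by
  rcases eq_or_ne i z with rfl | hi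
  · rw [hf.sum_neighborFinset_self, hf.1, if_pos rfl]
    ring
  · rw [hf.sum_neighborFinset_of_ne hi, if_neg hi, add_zero]

lemma IsHitting.sum_neighborFinset_add [DecidableEq V] {T : V → V → ℝ} (hT : IsHitting H T)
    {s t : V} (hst : s ≠ t) (u : V) :
    ∑ v ∈ H.neighborFinset u, (T v s + T v t) =
      H.degree u * (T u s + T u t - 2) + if u ∈ s(s, t) then (2 * #H.edgeFinset : ℝ) else 0 := by
  have hmem : (if u ∈ s(s, t) then (2 * #H.edgeFinset : ℝ) else 0) =
      (if u = s then (2 * #H.edgeFinset : ℝ) else 0) +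
        (if u = t then (2 * #H.edgeFinset : ℝ) else 0) := by
    rcases eq_or_ne u s with rfl | hs <;> rcases eq_or_ne u t with rfl | ht <;> simp_all
  rw [sum_add_distrib, (hT.isHittingTimeTo s).sum_neighborFinset,
    (hT.isHittingTimeTo t).sum_neighborFinset, hmem]
  ring

end HittingTime

section Subdivision

variable {G : SimpleGraph V} {q : ℕ}

@[simp] lemma qSubdivision_adj_inl_inr {u : V} {p : G.edgeSet × Fin q} :
    (qSubdivision G q).Adj (Sum.inl u) (Sum.inr p) ↔ u ∈ (p.1 : Sym2 V) := Iff.rfl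

@[simp] lemma qSubdivision_adj_inr_inl {u : V} {p : G.edgeSet × Fin q} :
    (qSubdivision G q).Adj (Sum.inr p) (Sum.inl u) ↔ u ∈ (p.1 : Sym2 V) := Iff.rfl

@[simp] lemma qSubdivision_not_adj_inl_inl {u v : V} :
    ¬ (qSubdivision G q).Adj (Sum.inl u) (Sum.inl v) := id

@[simp] lemma qSubdivision_not_adj_inr_inr {p p' : G.edgeSet × Fin q} :
    ¬ (qSubdivision G q).Adj (Sum.inr p) (Sum.inr p') := id

lemma qSubdivision_connected (hG : G.Connected) (hq : 0 < q) : (qSubdivision G q).Connected := by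
  have hold : ∀ u v : V, (qSubdivision G q).Reachable (Sum.inl u) (Sum.inl v) := by
    intro u v
    obtain ⟨w⟩ := hG.preconnected u v
    induction w with
    | nil => rfl
    | @cons a b _ hab _ ih =>
      let p : G.edgeSet × Fin q := (⟨s(a, b), G.mem_edgeSet.mpr hab⟩, ⟨0, hq⟩)
      have hap : (qSubdivision G q).Adj (Sum.inl a) (Sum.inr p) := Sym2.mem_mk_left a b
      have hpb : (qSubdivision G q).Adj (Sum.inr p) (Sum.inl b) := Sym2.mem_mk_right a b
      exact hap.reachable.trans (hpb.reachable.trans ih)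
  have hnew : ∀ x, ∃ u : V, (qSubdivision G q).Reachable x (Sum.inl u) := by
    rintro (u | p)
    · exact ⟨u, .rfl⟩
    · exact ⟨_, SimpleGraph.Adj.reachable (qSubdivision_adj_inr_inl.2 (Sym2.out_fst_mem _))⟩
  have : Nonempty (V ⊕ (G.edgeSet × Fin q)) := ⟨Sum.inl hG.nonempty.some⟩
  refine ⟨fun x y => ?_⟩
  obtain ⟨u, hx⟩ := hnew x
  obtain ⟨v, hy⟩ := hnew y
  exact hx.trans ((hold u v).trans hy.symm)

def endpointSum (c : V → ℝ) : Sym2 V → ℝ :=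
  Sym2.lift ⟨fun x y => c x + c y, fun _ _ => add_comm _ _⟩

@[simp] lemma endpointSum_mk (c : V → ℝ) (x y : V) : endpointSum c s(x, y) = c x + c y := rfl

variable [Fintype V] [DecidableEq V]

lemma qSubdivision_neighborFinset_inr {x y : V} (he : s(x, y) ∈ G.edgeSet) (a : Fin q) :
    (qSubdivision G q).neighborFinset (Sum.inr (⟨s(x, y), he⟩, a)) = {Sum.inl x, Sum.inl y} := by
  ext (u | p) <;> simp [Sym2.mem_iff]

lemma qSubdivision_sum_neighborFinset_inr (F : V ⊕ (G.edgeSet × Fin q) → ℝ)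
    (p : G.edgeSet × Fin q) :
    ∑ w ∈ (qSubdivision G q).neighborFinset (Sum.inr p), F w =
      endpointSum (F ∘ Sum.inl) p.1 := by
  obtain ⟨⟨e, he⟩, a⟩ := p
  induction e using Sym2.inductionOn with
  | _ x y =>
    rw [qSubdivision_neighborFinset_inr, sum_pair (by simpa using (G.mem_edgeSet.1 he).ne)]
    rfl

lemma qSubdivision_degree_inr (p : G.edgeSet × Fin q) :
    ((qSubdivision G q).degree (Sum.inr p) : ℝ) = 2 := by
  rw [← card_neighborFinset_eq_degree, card_eq_sum_ones, Nat.cast_sum,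
    qSubdivision_sum_neighborFinset_inr]
  obtain ⟨⟨e, he⟩, a⟩ := p
  induction e using Sym2.inductionOn with
  | _ x y => norm_num

variable [DecidableRel G.Adj]

variable (G) in
lemma sum_edgeSet_ite_mem (u : V) (φ : Sym2 V → ℝ) :
    ∑ e : G.edgeSet, (if u ∈ (e : Sym2 V) then φ e else 0) =
      ∑ v ∈ G.neighborFinset u, φ s(u, v) := by
  have hinc : G.incidenceFinset u = (G.neighborFinset u).image (s(u, ·)) := by
    ext e
    simp only [mem_incidenceFinset, incidenceSet, Set.mem_ofPred_eq, mem_image,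
      mem_neighborFinset, Sym2.mem_iff_exists]
    constructor
    · rintro ⟨he, v, rfl⟩
      exact ⟨v, he, rfl⟩
    · rintro ⟨v, huv, rfl⟩
      exact ⟨huv, v, rfl⟩
  rw [← sum_subtype G.edgeFinset (fun e => mem_edgeFinset) (fun e => if u ∈ e then φ e else 0),
    ← sum_filter, ← incidenceFinset_eq_filter, hinc,
    sum_image fun v _ w _ h => Sym2.congr_right.1 h]

lemma qSubdivision_sum_neighborFinset_inl (F : V ⊕ (G.edgeSet × Fin q) → ℝ) (φ : Sym2 V → ℝ)
    (hF : ∀ p : G.edgeSet × Fin q, F (Sum.inr p) = φ p.1) (u : V) :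
    ∑ w ∈ (qSubdivision G q).neighborFinset (Sum.inl u), F w =
      q * ∑ v ∈ G.neighborFinset u, φ s(u, v) := by
  rw [neighborFinset_eq_filter, sum_filter, Fintype.sum_sum_type, Fintype.sum_prod_type]
  simp only [qSubdivision_not_adj_inl_inl, if_false, sum_const_zero, zero_add,
    qSubdivision_adj_inl_inr, hF]
  rw [← sum_edgeSet_ite_mem G u φ, mul_sum]
  simp

lemma qSubdivision_degree_inl (u : V) :
    ((qSubdivision G q).degree (Sum.inl u) : ℝ) = q * G.degree u := by
  rw [← card_neighborFinset_eq_degree, card_eq_sum_ones, Nat.cast_sum,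
    qSubdivision_sum_neighborFinset_inl _ (fun _ => 1) fun _ => Nat.cast_one]
  simp

end Subdivision

section Extension

variable [Fintype V] [DecidableEq V] {G : SimpleGraph V} [DecidableRel G.Adj] {q : ℕ}

variable (G q) in
noncomputable def extendToSubdivision (c : V → ℝ) : V ⊕ (G.edgeSet × Fin q) → ℝ :=
  Sum.elim c fun p => 1 + endpointSum c p.1 / 2

lemma sum_neighborFinset_inl_extendToSubdivision (c : V → ℝ) (u : V) :
    ∑ w ∈ (qSubdivision G q).neighborFinset (Sum.inl u), extendToSubdivision G q c w =
      q * (G.degree u * (1 + c u / 2) + (∑ v ∈ G.neighborFinset u, c v) / 2) := by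
  rw [qSubdivision_sum_neighborFinset_inl _ (fun e => 1 + endpointSum c e / 2) fun _ => rfl]
  simp only [endpointSum_mk, add_div, sum_add_distrib, sum_const, card_neighborFinset_eq_degree,
    nsmul_eq_mul, ← sum_div]
  ring

lemma isHittingTimeTo_extendToSubdivision_inl (hdeg : ∀ u, 0 < G.degree u) (hq : 0 < q)
    {j : V} {c : V → ℝ} (hcj : c j = 0)
    (hc : ∀ u, u ≠ j → ∑ v ∈ G.neighborFinset u, c v = G.degree u * (c u - 4)) :
    IsHittingTimeTo (qSubdivision G q) (Sum.inl j) (extendToSubdivision G q c) := by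
  refine ⟨hcj, ?_⟩
  rintro (u | p) hne
  · have hu : u ≠ j := fun h => hne (congrArg Sum.inl h)
    have hd : (G.degree u : ℝ) ≠ 0 := by exact_mod_cast (hdeg u).ne'
    have hq' : (q : ℝ) ≠ 0 := by exact_mod_cast hq.ne'
    rw [sum_neighborFinset_inl_extendToSubdivision, qSubdivision_degree_inl, hc u hu]
    field_simp
    simp only [extendToSubdivision, Sum.elim_inl]
    ring
  · rw [qSubdivision_sum_neighborFinset_inr, qSubdivision_degree_inr]
    rfl

/-- `M` is the value the new-node formula would give at the target `i` itself (the mean return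
time to `i`); subtracting it there makes the target value `0`. -/
lemma isHittingTimeTo_extendToSubdivision_inr (hdeg : ∀ u, 0 < G.degree u) (hq : 0 < q)
    (i : G.edgeSet × Fin q) {c : V → ℝ} {M : ℝ} (hM : 1 + endpointSum c i.1 / 2 = M)
    (hc : ∀ u, q * ∑ v ∈ G.neighborFinset u, c v =
      q * G.degree u * (c u - 4) + 2 * if u ∈ (i.1 : Sym2 V) then M else 0) :
    IsHittingTimeTo (qSubdivision G q) (Sum.inr i)
      (fun w => extendToSubdivision G q c w - if w = Sum.inr i then M else 0) := by
  refine ⟨by simp [extendToSubdivision, hM], ?_⟩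
  rintro (u | p) hne
  · have hd : (G.degree u : ℝ) ≠ 0 := by exact_mod_cast (hdeg u).ne'
    have hq' : (q : ℝ) ≠ 0 := by exact_mod_cast hq.ne'
    have hmem : Sum.inr i ∈ (qSubdivision G q).neighborFinset (Sum.inl u) ↔
        u ∈ (i.1 : Sym2 V) := by
      simp
    rw [sum_sub_distrib, sum_ite_eq', sum_neighborFinset_inl_extendToSubdivision,
      qSubdivision_degree_inl]
    simp only [extendToSubdivision, Sum.elim_inl, reduceCtorEq, if_false, sub_zero, hmem]
    field_simp
    linear_combination -hc u
  · have hp : p ≠ i := fun h => hne (congrArg Sum.inr h)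
    rw [qSubdivision_sum_neighborFinset_inr, qSubdivision_degree_inr]
    simp [extendToSubdivision, hp, Function.comp_def]

end Extension

/-- hitting times between a new node (with neighbors `s, t`) and an old
node `j` of `S_q(G)`. -/
theorem stmt11 [Fintype V] [DecidableEq V] (G : SimpleGraph V) [DecidableRel G.Adj]
    (hconn : G.Connected) (q : ℕ) (hq : 0 < q)
    (T : V → V → ℝ) (T' : (V ⊕ (G.edgeSet × Fin q)) → (V ⊕ (G.edgeSet × Fin q)) → ℝ)
    (hT : IsHitting G T) (hT' : IsHitting (qSubdivision G q) T')
    (s t : V) (hst : G.Adj s t) (a : Fin q) (j : V) :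
    T' (Sum.inr (⟨s(s, t), G.mem_edgeSet.mpr hst⟩, a)) (Sum.inl j) =
      1 + 2 * (T s j + T t j) ∧
    T' (Sum.inl j) (Sum.inr (⟨s(s, t), G.mem_edgeSet.mpr hst⟩, a)) =
      2 * (G.edgeFinset.card : ℝ) * q - 1 + 2 * (T j s + T j t) - (T t s + T s t) := by
  have : Nontrivial V := ⟨⟨s, t, hst.ne⟩⟩
  have hdeg : ∀ u, 0 < G.degree u := fun u => hconn.preconnected.degree_pos_of_nontrivial u
  have hS := qSubdivision_connected hconn hq
  set i : G.edgeSet × Fin q := (⟨s(s, t), G.mem_edgeSet.mpr hst⟩, a)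
  constructor
  · have hj := hT.isHittingTimeTo j
    have key := (hT'.isHittingTimeTo (Sum.inl j)).unique hS
      (isHittingTimeTo_extendToSubdivision_inl hdeg hq (c := fun u => 4 * T u j)
        (by rw [hT.1 j, mul_zero]) fun u hu => by rw [← mul_sum, hj.sum_neighborFinset_of_ne hu]; ring)
    rw [congrFun key (Sum.inr i)]
    simp only [extendToSubdivision, Sum.elim_inr, endpointSum_mk, i]
    ring
  · set M : ℝ := 2 * #G.edgeFinset * q
    let c : V → ℝ := fun w => M - 1 + 2 * (T w s + T w t) - (T s t + T t s)
    have key := (hT'.isHittingTimeTo (Sum.inr i)).unique hS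
      (isHittingTimeTo_extendToSubdivision_inr hdeg hq i (c := c) (M := M)
        (by simp only [endpointSum_mk, hT.1, c, i]; ring) fun u => by
          simp only [c, sum_sub_distrib, sum_add_distrib, sum_const, ← mul_sum,
            hT.sum_neighborFinset_add hst.ne, card_neighborFinset_eq_degree, nsmul_eq_mul]
          split_ifs <;> ring)
    rw [congrFun key (Sum.inl j)]
    simp only [extendToSubdivision, Sum.elim_inl, reduceCtorEq, if_false, sub_zero, c]
    ring
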